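/- Let h : ℝ → ℝ be a function supported in the interval (π/4, π], and for z ∈ ℝ define b_z = (1/(2π)) ∫₀^∞ ω^z h(ω)² ω dω and d_z = (1/(2π)) ∫₀^∞ ω^z h(ω) h(2ω) ω dω (assuming these integrals are finite and h is not almost everywhere equal to ω ↦ h(2ω) on the relevant overlap). Then |d_z| ≤ 2^{-(z/2+2)} b_z, i.e. b_z ≥ 2^{z/2+2} |d_z|. -/

import Mathlib

/-!
The integrand of `d_z` vanishes off `(π/4, π/2]`, the set where both `ω` and `2ω` lie in
`(π/4, π]`. There, the weighted AM–GM inequality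
`|h(ω) h(2ω)| ≤ h(ω)² / (2q) + q h(2ω)² / 2` with `q = 2^{z/2+1}` and the substitution
`ω ↦ 2ω` bound `|d_z|` by `2^{-(z/2+2)}` times the contributions of `(π/4, π/2]` and
`(π/2, π]` to `b_z`. These intervals are disjoint, so together they make up `b_z` only once.
-/

open MeasureTheory Real Set

theorem setIntegral_eq_intervalIntegral_of_forall_compl_eq_zero {E : Type*}
    [NormedAddCommGroup E] [NormedSpace ℝ E] {f : ℝ → E} {s : Set ℝ} {a b : ℝ}
    (hab : a ≤ b) (hs : Ioc a b ⊆ s) (hf : ∀ x ∉ Ioc a b, f x = 0) :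
    ∫ x in s, f x = ∫ x in a..b, f x := by
  rw [intervalIntegral.integral_of_le hab, setIntegral_eq_integral_of_forall_compl_eq_zero hf,
    setIntegral_eq_integral_of_forall_compl_eq_zero fun x hx ↦ hf x fun hx' ↦ hx (hs hx')]

theorem abs_intervalIntegral_le_of_le_add_dilation {f g : ℝ → ℝ} {a c r : ℝ} (hr : r ≠ 0)
    (ha : a ≤ r * a) (hf₁ : IntervalIntegrable f volume a (r * a))
    (hf₂ : IntervalIntegrable f volume (r * a) (r * (r * a)))
    (hg : ∀ ω ∈ Ioc a (r * a), |g ω| ≤ c * (f ω + r * f (r * ω))) :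
    |∫ ω in a..r * a, g ω| ≤ c * ∫ ω in a..r * (r * a), f ω := by
  have hf_dil : IntervalIntegrable (fun ω ↦ f (r * ω)) volume a (r * a) := by
    simpa [hr] using hf₂.comp_mul_left (c := r)
  have hbound : IntervalIntegrable (fun ω ↦ c * (f ω + r * f (r * ω))) volume a (r * a) :=
    (hf₁.add (hf_dil.const_mul r)).const_mul c
  calc |∫ ω in a..r * a, g ω|
      ≤ ∫ ω in a..r * a, |g ω| := intervalIntegral.abs_integral_le_integral_abs ha
    _ ≤ ∫ ω in a..r * a, c * (f ω + r * f (r * ω)) := by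
        rw [intervalIntegral.integral_of_le ha, intervalIntegral.integral_of_le ha]
        exact integral_mono_of_nonneg (ae_of_all _ fun _ ↦ abs_nonneg _)
          hbound.1 ((ae_restrict_iff' measurableSet_Ioc).2 (ae_of_all _ hg))
    _ = c * ((∫ ω in a..r * a, f ω) + ∫ ω in r * a..r * (r * a), f ω) := by
        rw [intervalIntegral.integral_const_mul, intervalIntegral.integral_add hf₁
          (hf_dil.const_mul r), intervalIntegral.integral_const_mul,
          intervalIntegral.integral_comp_mul_left f hr, smul_eq_mul, mul_inv_cancel_left₀ hr]
    _ = c * ∫ ω in a..r * (r * a), f ω := by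
        rw [intervalIntegral.integral_add_adjacent_intervals hf₁ hf₂]

theorem abs_rpow_mul_mul_mul_le {z r ω : ℝ} (a b : ℝ) (hr : 0 < r) (hω : 0 ≤ ω) :
    |ω ^ z * a * b * ω| ≤
      (2 * r ^ (z / 2 + 1))⁻¹ * (ω ^ z * a ^ 2 * ω + r * ((r * ω) ^ z * b ^ 2 * (r * ω))) := by
  set q := r ^ (z / 2 + 1)
  set w := ω ^ z * ω
  have hw : 0 ≤ w := mul_nonneg (rpow_nonneg hω z) hω
  have hq2 : q ^ 2 = r ^ z * r ^ 2 := by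
    rw [← rpow_mul_natCast hr.le, show (z / 2 + 1) * ((2 : ℕ) : ℝ) = z + 2 by push_cast; ring,
      rpow_add hr, rpow_two]
  have hdil : r * ((r * ω) ^ z * b ^ 2 * (r * ω)) = q ^ 2 * w * b ^ 2 := by
    rw [mul_rpow hr.le hω, hq2]
    ring
  have hamgm : 2 * q * (|a| * |b|) ≤ a ^ 2 + q ^ 2 * b ^ 2 := by
    nlinarith [sq_nonneg (|a| - q * |b|), sq_abs a, sq_abs b]
  rw [hdil, abs_mul, abs_mul, abs_mul, abs_of_nonneg (rpow_nonneg hω z), abs_of_nonneg hω,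
    le_inv_mul_iff₀ (by positivity)]
  calc 2 * q * (ω ^ z * |a| * |b| * ω) = w * (2 * q * (|a| * |b|)) := by ring
    _ ≤ w * (a ^ 2 + q ^ 2 * b ^ 2) := mul_le_mul_of_nonneg_left hamgm hw
    _ = ω ^ z * a ^ 2 * ω + q ^ 2 * w * b ^ 2 := by ring

theorem abs_setIntegral_rpow_mul_comp_two_mul_le {h : ℝ → ℝ} {z a : ℝ} (ha : 0 < a)
    (hsupp : ∀ ω ∉ Ioc a (2 * (2 * a)), h ω = 0)
    (hint : IntegrableOn (fun ω ↦ ω ^ z * h ω ^ 2 * ω) (Ioi 0)) :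
    |∫ ω in Ioi 0, ω ^ z * h ω * h (2 * ω) * ω| ≤
      2 ^ (-(z / 2 + 2)) * ∫ ω in Ioi 0, ω ^ z * h ω ^ 2 * ω := by
  set f : ℝ → ℝ := fun ω ↦ ω ^ z * h ω ^ 2 * ω
  set g : ℝ → ℝ := fun ω ↦ ω ^ z * h ω * h (2 * ω) * ω
  have hf_supp : ∀ ω ∉ Ioc a (2 * (2 * a)), f ω = 0 := fun ω hω ↦ by simp [f, hsupp ω hω]
  have hg_supp : ∀ ω ∉ Ioc a (2 * a), g ω = 0 := by
    intro ω hω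
    by_cases hω' : ω ∈ Ioc a (2 * (2 * a))
    · have : h (2 * ω) = 0 := hsupp _ fun h2 ↦ hω ⟨hω'.1, by linarith [h2.2]⟩
      simp [g, this]
    · simp [g, hsupp ω hω']
  have hf_int (b c : ℝ) (hb : 0 < b) (hbc : b ≤ c) : IntervalIntegrable f volume b c :=
    (intervalIntegrable_iff_integrableOn_Ioc_of_le hbc).2
      (hint.mono_set (Ioc_subset_Ioi_self.trans (Ioi_subset_Ioi hb.le)))
  have hc : (2 * (2 : ℝ) ^ (z / 2 + 1))⁻¹ = 2 ^ (-(z / 2 + 2)) := by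
    rw [rpow_neg zero_le_two, rpow_add two_pos, rpow_add two_pos, rpow_one, rpow_two]
    ring
  have key := abs_intervalIntegral_le_of_le_add_dilation (g := g) (c := 2 ^ (-(z / 2 + 2)))
    two_ne_zero (by linarith) (hf_int a _ ha (by linarith)) (hf_int (2 * a) _ (by linarith)
    (by linarith)) fun ω hω ↦ by
      simpa only [f, g, hc] using abs_rpow_mul_mul_mul_le (z := z) (h ω) (h (2 * ω)) two_pos
        (by linarith [hω.1] : (0 : ℝ) ≤ ω)
  rwa [setIntegral_eq_intervalIntegral_of_forall_compl_eq_zero (by linarith)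
      (Ioc_subset_Ioi_self.trans (Ioi_subset_Ioi ha.le)) hg_supp,
    setIntegral_eq_intervalIntegral_of_forall_compl_eq_zero (by linarith)
      (Ioc_subset_Ioi_self.trans (Ioi_subset_Ioi ha.le)) hf_supp]

theorem stmt_0_general (h : ℝ → ℝ) (z : ℝ)
    (hsupp : ∀ ω : ℝ, ω ∉ Set.Ioc (π / 4) π → h ω = 0)
    (hint : IntegrableOn (fun ω : ℝ => ω ^ z * h ω ^ 2 * ω) (Set.Ioi 0))
    (bz dz : ℝ)
    (hb : bz = (1 / (2 * π)) * ∫ ω in Set.Ioi (0 : ℝ), ω ^ z * h ω ^ 2 * ω)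
    (hd : dz = (1 / (2 * π)) * ∫ ω in Set.Ioi (0 : ℝ), ω ^ z * h ω * h (2 * ω) * ω) :
    |dz| ≤ (2 : ℝ) ^ (-(z / 2 + 2)) * bz ∧ (2 : ℝ) ^ (z / 2 + 2) * |dz| ≤ bz := by
  have hD := abs_setIntegral_rpow_mul_comp_two_mul_le (a := π / 4) (by positivity)
    (by rwa [show 2 * (2 * (π / 4)) = π by ring]) hint
  have hnorm : 0 < 1 / (2 * π) := by positivity
  have hdz : |dz| ≤ (2 : ℝ) ^ (-(z / 2 + 2)) * bz := by
    rw [hd, hb, abs_mul, abs_of_pos hnorm, mul_left_comm]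
    exact mul_le_mul_of_nonneg_left hD hnorm.le
  refine ⟨hdz, ?_⟩
  rwa [rpow_neg zero_le_two, le_inv_mul_iff₀ (by positivity)] at hdz

/-- For `h` supported in `(π/4, π]`, with
`b_z = (1/(2π)) ∫₀^∞ ω^z h(ω)² ω dω` and `d_z = (1/(2π)) ∫₀^∞ ω^z h(ω) h(2ω) ω dω`,
one has `|d_z| ≤ 2^{-(z/2+2)} b_z`, i.e. `b_z ≥ 2^{z/2+2} |d_z|`. -/
theorem stmt_0 (h : ℝ → ℝ) (z : ℝ) (hmeas : Measurable h)
    (hsupp : ∀ ω : ℝ, ω ∉ Set.Ioc (π / 4) π → h ω = 0)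
    (hint : IntegrableOn (fun ω : ℝ => ω ^ z * h ω ^ 2 * ω) (Set.Ioi 0))
    (bz dz : ℝ)
    (hb : bz = (1 / (2 * π)) * ∫ ω in Set.Ioi (0 : ℝ), ω ^ z * h ω ^ 2 * ω)
    (hd : dz = (1 / (2 * π)) * ∫ ω in Set.Ioi (0 : ℝ), ω ^ z * h ω * h (2 * ω) * ω) :
    |dz| ≤ (2 : ℝ) ^ (-(z / 2 + 2)) * bz ∧ (2 : ℝ) ^ (z / 2 + 2) * |dz| ≤ bz :=
  stmt_0_general h z hsupp hint bz dz hb hd
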